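/- arXiv:1610.02379 — 2 statements merged into one kernel-verified Lean document; each statement's English description precedes it below -/
import Mathlib

section
/- Suppose M > 0 and there exist positive semidefinite infinite matrices Γ and Δ such that M·δ_{ij} − 1 = Γ_{ij}(1 − conj(λ_i¹)λ_j¹) + Δ_{ij}(1 − conj(λ_i²)λ_j²) for all i, j, where {λ_i} is a sequence in the bidisk 𝔻². Then for every admissible kernel k on 𝔻², the normalized Gram matrix G^k with entries G^k_{ij} = k(λ_i, λ_j)/√(k(λ_i,λ_i)k(λ_j,λ_j)) satisfies G^k ≤ M·I as an operator inequality (i.e., the matrix M·δ_{ij} − G^k_{ij} is positive semidefinite on finitely supported sequences). -/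
open scoped ComplexConjugate ComplexOrder

/-- The open bidisk in `ℂ²`. -/
def Bidisk : Set (ℂ × ℂ) := {z | ‖z.1‖ < 1 ∧ ‖z.2‖ < 1}

/-- An infinite matrix is positive semidefinite if all its finite quadratic forms
are nonnegative. -/
def IsPSDMatrix (A : ℕ → ℕ → ℂ) : Prop :=
  ∀ (s : Finset ℕ) (c : ℕ → ℂ), 0 ≤ ∑ i ∈ s, ∑ j ∈ s, conj (c i) * c j * A i j

/-- A kernel on the bidisk is positive semidefinite. -/
def IsPSDKernel (k : (ℂ × ℂ) → (ℂ × ℂ) → ℂ) : Prop :=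
  ∀ (n : ℕ) (p : Fin n → ℂ × ℂ), (∀ i, p i ∈ Bidisk) →
    ∀ c : Fin n → ℂ, 0 ≤ ∑ i, ∑ j, conj (c i) * c j * k (p i) (p j)

/-- A kernel on the bidisk is admissible if it is positive semidefinite and multiplication
by each coordinate function is a contraction, i.e. `(1 - conj(λⁿ) zⁿ) k(λ,z) ⪰ 0` for
`n = 1, 2`. -/
def IsAdmissibleKernel (k : (ℂ × ℂ) → (ℂ × ℂ) → ℂ) : Prop :=
  IsPSDKernel k ∧
  IsPSDKernel (fun l z => (1 - conj l.1 * z.1) * k l z) ∧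
  IsPSDKernel (fun l z => (1 - conj l.2 * z.2) * k l z)

/-!
Write `K¹ᵢⱼ = (1 - conj(λᵢ¹)λⱼ¹) k(λᵢ, λⱼ)`, `K²` likewise, and `dᵢ = k(λᵢ, λᵢ)^{-1/2}`, so that
`Gᵏᵢⱼ = dᵢ dⱼ k(λᵢ, λⱼ)` has unit diagonal. Then `M δᵢⱼ - Gᵏᵢⱼ = (M δᵢⱼ - 1) Gᵏᵢⱼ`, and the
decomposition turns this into `Γᵢⱼ · dᵢ dⱼ K¹ᵢⱼ + Δᵢⱼ · dᵢ dⱼ K²ᵢⱼ`: a sum of Schur products of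
positive semidefinite matrices. Positivity of the infinite matrices is checked on finite sections,
where the finite Schur product theorem applies.
-/

open scoped Matrix

theorem mul_ite_sub_eq_mul_ite_sub_one_mul {R ι : Type*} [Ring R] {i j : ι} [Decidable (i = j)]
    (M x : R) (hx : i = j → x = 1) :
    M * (if i = j then 1 else 0) - x = (M * (if i = j then 1 else 0) - 1) * x := by
  split_ifs with hij
  · simp [hx hij]
  · simp

-- No Hermitian hypothesis is needed over `ℂ`: a real-valued quadratic form forces `Aᴴ = A`.
theorem Matrix.posSemidef_of_forall_star_dotProduct_mulVec_nonneg {n : Type*} [Fintype n]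
    [DecidableEq n] {A : Matrix n n ℂ} (hA : ∀ x, 0 ≤ star x ⬝ᵥ (A *ᵥ x)) : A.PosSemidef := by
  rw [← Matrix.isPositive_toEuclideanLin_iff, LinearMap.isPositive_iff_complex]
  intro x
  have hx : inner ℂ (A.toEuclideanLin x) x = conj (star x.ofLp ⬝ᵥ (A *ᵥ x.ofLp)) := by
    rw [← inner_conj_symm, EuclideanSpace.inner_eq_star_dotProduct, dotProduct_comm]
    rfl
  obtain ⟨hre, him⟩ := Complex.nonneg_iff.mp (hA x.ofLp)
  rw [hx]
  exact ⟨Complex.ext (by simp) (by simp [← him]), by simpa using hre⟩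

theorem Matrix.star_dotProduct_mulVec_eq_sum {n : Type*} [Fintype n] (A : Matrix n n ℂ)
    (x : n → ℂ) : star x ⬝ᵥ (A *ᵥ x) = ∑ i, ∑ j, conj (x i) * x j * A i j := by
  simp only [dotProduct, mulVec, Finset.mul_sum, Pi.star_apply, RCLike.star_def]
  exact Fintype.sum_congr _ _ fun i => Fintype.sum_congr _ _ fun j => by ring

theorem sum_sum_eq_star_dotProduct_submatrix_mulVec (A : ℕ → ℕ → ℂ) (s : Finset ℕ)
    (c : ℕ → ℂ) : ∑ i ∈ s, ∑ j ∈ s, conj (c i) * c j * A i j =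
      star (fun i : s => c i) ⬝ᵥ ((Matrix.of A).submatrix (↑) (↑) *ᵥ fun i : s => c i) := by
  simp only [Matrix.star_dotProduct_mulVec_eq_sum, Matrix.submatrix_apply, Matrix.of_apply]
  rw [← Finset.sum_coe_sort s]
  exact Fintype.sum_congr _ _ fun i => (Finset.sum_coe_sort s _).symm

namespace IsPSDMatrix

variable {A B : ℕ → ℕ → ℂ}

theorem posSemidef_submatrix (hA : IsPSDMatrix A) (s : Finset ℕ) :
    ((Matrix.of A).submatrix ((↑) : s → ℕ) (↑)).PosSemidef := by
  classical
  refine Matrix.posSemidef_of_forall_star_dotProduct_mulVec_nonneg fun x => ?_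
  have hx : (fun i : s => if h : (i : ℕ) ∈ s then x ⟨i, h⟩ else 0) = x := by
    funext i; simp
  have := hA s fun n => if h : n ∈ s then x ⟨n, h⟩ else 0
  rwa [sum_sum_eq_star_dotProduct_submatrix_mulVec, hx] at this

theorem of_posSemidef_submatrix
    (hA : ∀ s : Finset ℕ, ((Matrix.of A).submatrix ((↑) : s → ℕ) (↑)).PosSemidef) :
    IsPSDMatrix A := fun s c => by
  rw [sum_sum_eq_star_dotProduct_submatrix_mulVec]
  exact (hA s).dotProduct_mulVec_nonneg _

theorem _root_.isPSDMatrix_conj_mul (d : ℕ → ℂ) : IsPSDMatrix fun i j => conj (d i) * d j :=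
  of_posSemidef_submatrix fun s => Matrix.posSemidef_vecMulVec_star_self fun i : s => d i

theorem add (hA : IsPSDMatrix A) (hB : IsPSDMatrix B) :
    IsPSDMatrix fun i j => A i j + B i j :=
  of_posSemidef_submatrix fun s => (hA.posSemidef_submatrix s).add (hB.posSemidef_submatrix s)

theorem mul (hA : IsPSDMatrix A) (hB : IsPSDMatrix B) :
    IsPSDMatrix fun i j => A i j * B i j :=
  of_posSemidef_submatrix fun s =>
    (hA.posSemidef_submatrix s).hadamard (hB.posSemidef_submatrix s)

theorem conj_mul_mul (hA : IsPSDMatrix A) (d : ℕ → ℂ) :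
    IsPSDMatrix fun i j => conj (d i) * d j * A i j :=
  (isPSDMatrix_conj_mul d).mul hA

end IsPSDMatrix

theorem IsPSDKernel.posSemidef {K : ℂ × ℂ → ℂ × ℂ → ℂ} (hK : IsPSDKernel K) {n : ℕ}
    {p : Fin n → ℂ × ℂ} (hp : ∀ i, p i ∈ Bidisk) :
    (Matrix.of fun i j => K (p i) (p j)).PosSemidef :=
  Matrix.posSemidef_of_forall_star_dotProduct_mulVec_nonneg fun c => by
    simpa [Matrix.star_dotProduct_mulVec_eq_sum] using hK n p hp c

theorem IsPSDKernel.isPSDMatrix {K : ℂ × ℂ → ℂ × ℂ → ℂ} (hK : IsPSDKernel K)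
    {l : ℕ → ℂ × ℂ} (hl : ∀ i, l i ∈ Bidisk) : IsPSDMatrix fun i j => K (l i) (l j) :=
  IsPSDMatrix.of_posSemidef_submatrix fun s => by
    have := (hK.posSemidef (p := l ∘ (↑) ∘ s.equivFin.symm) fun _ => hl _).submatrix s.equivFin
    convert this using 1
    ext i j
    simp

theorem gram_upper_bound_of_decomposition_general
    (l : ℕ → ℂ × ℂ) (hl : ∀ i, l i ∈ Bidisk) (M : ℝ)
    (Γ Δ : ℕ → ℕ → ℂ) (hΓ : IsPSDMatrix Γ) (hΔ : IsPSDMatrix Δ)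
    (hdec : ∀ i j, (M : ℂ) * (if i = j then 1 else 0) - 1 =
      Γ i j * (1 - conj (l i).1 * (l j).1) + Δ i j * (1 - conj (l i).2 * (l j).2))
    (k : (ℂ × ℂ) → (ℂ × ℂ) → ℂ) (hk : IsAdmissibleKernel k)
    (hdiag : ∀ i, 0 < (k (l i) (l i)).re ∧ (k (l i) (l i)).im = 0) :
    IsPSDMatrix (fun i j =>
      (M : ℂ) * (if i = j then 1 else 0) -
        k (l i) (l j) /
          ((Real.sqrt ((k (l i) (l i)).re) * Real.sqrt ((k (l j) (l j)).re) : ℝ) : ℂ)) := by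
  set d : ℕ → ℂ := fun i => ((Real.sqrt (k (l i) (l i)).re)⁻¹ : ℝ)
  have hgram : ∀ i j, k (l i) (l j) /
      ((Real.sqrt ((k (l i) (l i)).re) * Real.sqrt ((k (l j) (l j)).re) : ℝ) : ℂ) =
      conj (d i) * d j * k (l i) (l j) := by
    intro i j
    simp only [d, Complex.conj_ofReal]
    push_cast
    ring
  have hgram_diag : ∀ i, conj (d i) * d i * k (l i) (l i) = 1 := by
    intro i
    rw [← hgram, Real.mul_self_sqrt (hdiag i).1.le,
      div_eq_one_iff_eq (by exact_mod_cast (hdiag i).1.ne')]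
    exact Complex.ext rfl (by simp [(hdiag i).2])
  have hentry : ∀ i j, (M : ℂ) * (if i = j then 1 else 0) - conj (d i) * d j * k (l i) (l j) =
      Γ i j * (conj (d i) * d j * ((1 - conj (l i).1 * (l j).1) * k (l i) (l j))) +
      Δ i j * (conj (d i) * d j * ((1 - conj (l i).2 * (l j).2) * k (l i) (l j))) := by
    intro i j
    rw [mul_ite_sub_eq_mul_ite_sub_one_mul _ _ fun hij => hij ▸ hgram_diag i, hdec]
    ring
  simp_rw [hgram, hentry]
  exact (hΓ.mul ((hk.2.1.isPSDMatrix hl).conj_mul_mul d)).add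
    (hΔ.mul ((hk.2.2.isPSDMatrix hl).conj_mul_mul d))

/-- Condition (a') implies condition (a): if `M δ_{ij} − 1` decomposes as
`Γ_{ij}(1 − conj(λ_i¹)λ_j¹) + Δ_{ij}(1 − conj(λ_i²)λ_j²)` with `Γ, Δ ⪰ 0`, then for every
admissible kernel `k` the normalized Gram matrix satisfies `G^k ≤ M·I`. -/
theorem gram_upper_bound_of_decomposition
    (l : ℕ → ℂ × ℂ) (hl : ∀ i, l i ∈ Bidisk) (M : ℝ) (hM : 0 < M)
    (Γ Δ : ℕ → ℕ → ℂ) (hΓ : IsPSDMatrix Γ) (hΔ : IsPSDMatrix Δ)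
    (hdec : ∀ i j, (M : ℂ) * (if i = j then 1 else 0) - 1 =
      Γ i j * (1 - conj (l i).1 * (l j).1) + Δ i j * (1 - conj (l i).2 * (l j).2))
    (k : (ℂ × ℂ) → (ℂ × ℂ) → ℂ) (hk : IsAdmissibleKernel k)
    (hdiag : ∀ i, 0 < (k (l i) (l i)).re ∧ (k (l i) (l i)).im = 0) :
    IsPSDMatrix (fun i j =>
      (M : ℂ) * (if i = j then 1 else 0) -
        k (l i) (l j) /
          ((Real.sqrt ((k (l i) (l i)).re) * Real.sqrt ((k (l j) (l j)).re) : ℝ) : ℂ)) :=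
  gram_upper_bound_of_decomposition_general l hl M Γ Δ hΓ hΔ hdec k hk hdiag
end

section
/- Fix points λ_1,…,λ_n in 𝔻² and M > 0. If the self-adjoint n×n matrix M·I − J (where J is the all-ones matrix) is not in the closed wedge 𝒯_n of matrices of the form T_{ij} = (1 − λ_i¹ conj(λ_j¹))Γ_{ij} + (1 − λ_i² conj(λ_j²))Δ_{ij} with Γ, Δ positive semidefinite, then there exists a positive definite n×n matrix K satisfying (1 − λ_i¹ conj(λ_j¹))·K_{ij} ⪰ 0 and (1 − λ_i² conj(λ_j²))·K_{ij} ⪰ 0 (Schur products positive semidefinite) but for which the matrix (M·δ_{ij} − 1)K_{ij} is not positive semidefinite. -/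
/-!
The wedge `𝒯 = {c₁ ⊙ Γ + c₂ ⊙ Δ | Γ, Δ ⪰ 0}`, where `cₖ = (1 - λᵢᵏ conj λⱼᵏ)ᵢⱼ`, is a convex cone.
It is closed because the diagonals of `c₁, c₂` are positive, so the diagonal of
`c₁ ⊙ Γ + c₂ ⊙ Δ` bounds `tr Γ` and `tr Δ`, and hence all entries of `Γ` and `Δ`.
Separating `A = M I - J` from `𝒯` gives a Hermitian `K` with `re Σ Tᵢⱼ Kᵢⱼ ≥ 0` on `𝒯` and
`re Σ Aᵢⱼ Kᵢⱼ < 0`. Testing against `c₁ ⊙ x x*`, `c₂ ⊙ x x*` and `x x*` shows that `c₁ ⊙ K`,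
`c₂ ⊙ K` and `K` are positive semidefinite; here `x x* ∈ 𝒯` because `x x* = c₁ ⊙ (S ⊙ x x*)`
with `S = (1 - λᵢ¹ conj λⱼ¹)⁻¹` the Szegő kernel, which is positive semidefinite, as is its
Schur product with `x x*`. The quadratic form of `A ⊙ K` at the all-ones vector is
`re Σ Aᵢⱼ Kᵢⱼ < 0`, and this survives replacing `K` by the positive definite `K + ε I` for
small `ε > 0`.
-/

open scoped ComplexConjugate ComplexOrder

open Matrix Filter

namespace Matrix

variable {ι : Type*}

theorem norm_mul_conj_lt_one {μ : ι → ℂ} (hμ : ∀ i, ‖μ i‖ < 1) (i j : ι) :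
    ‖μ i * conj (μ j)‖ < 1 := by
  rw [norm_mul, Complex.norm_conj]
  exact mul_lt_one_of_nonneg_of_lt_one_left (norm_nonneg _) (hμ i) (hμ j).le

section PosSemidef

variable [Fintype ι]

theorem isClosed_setOf_posSemidef : IsClosed {A : Matrix ι ι ℂ | A.PosSemidef} := by
  simp only [posSemidef_iff_dotProduct_mulVec, Set.ofPred_and, Set.ofPred_forall]
  exact (isClosed_eq continuous_id.matrix_conjTranspose continuous_id).inter
    (isClosed_iInter fun x => isClosed_le continuous_const
      (continuous_const.dotProduct (continuous_id.matrix_mulVec continuous_const)))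

theorem PosSemidef.norm_apply_le_trace {Γ : Matrix ι ι ℂ} (hΓ : Γ.PosSemidef) (i j : ι) :
    ‖Γ i j‖ ≤ Γ.trace.re := by
  have hdiag : ∀ k, Γ k k = (Γ k k).re := fun k =>
    Complex.ext rfl (by simpa using (Complex.le_def.1 hΓ.diag_nonneg).2.symm)
  have hnonneg : ∀ k, 0 ≤ (Γ k k).re := fun k => (Complex.le_def.1 hΓ.diag_nonneg).1
  have hle : ∀ k, (Γ k k).re ≤ Γ.trace.re := fun k => by
    rw [trace, Complex.re_sum]
    exact Finset.single_le_sum (f := fun k => (Γ k k).re) (fun k _ => hnonneg k)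
      (Finset.mem_univ k)
  -- the `2 × 2` principal minor on `i, j` (possibly `i = j`) is nonnegative
  have hdet := (hΓ.submatrix ![i, j]).det_nonneg
  rw [det_fin_two] at hdet
  simp only [submatrix_apply, Matrix.cons_val_zero, Matrix.cons_val_one] at hdet
  rw [hdiag i, hdiag j, ← hΓ.1.apply j i, RCLike.star_def, Complex.mul_conj',
    ← Complex.ofReal_mul, ← Complex.ofReal_pow, ← Complex.ofReal_sub, Complex.zero_le_real] at hdet
  nlinarith [hnonneg i, hnonneg j, hle i, hle j, norm_nonneg (Γ i j)]

theorem posSemidef_szegoKernel {μ : ι → ℂ} (hμ : ∀ i, ‖μ i‖ < 1) :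
    (of fun i j => (1 - μ i * conj (μ j))⁻¹).PosSemidef := by
  have hsum : HasSum (fun k : ℕ => vecMulVec (μ ^ k) (star (μ ^ k)))
      (of fun i j => (1 - μ i * conj (μ j))⁻¹) :=
    Pi.hasSum.2 fun i => Pi.hasSum.2 fun j => by
      simpa [vecMulVec, mul_pow] using hasSum_geometric_of_norm_lt_one (norm_mul_conj_lt_one hμ i j)
  exact isClosed_setOf_posSemidef.mem_of_tendsto hsum.tendsto_sum_nat
    (Eventually.of_forall fun n => posSemidef_sum _ fun k _ => posSemidef_vecMulVec_self_star _)

end PosSemidef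

section RePairing

variable [Fintype ι]

/-- `rePairing T K = re tr (T * Kᵀ)`, so `T ↦ re tr (W * T)` is `rePairing · Wᵀ`. -/
def rePairing (T K : Matrix ι ι ℂ) : ℝ := (∑ i, ∑ j, T i j * K i j).re

theorem rePairing_add_right (T K L : Matrix ι ι ℂ) :
    rePairing T (K + L) = rePairing T K + rePairing T L := by
  simp only [rePairing, add_apply, mul_add, Finset.sum_add_distrib, Complex.add_re]

theorem rePairing_real_smul_right (T K : Matrix ι ι ℂ) (r : ℝ) :
    rePairing T (r • K) = r * rePairing T K := by
  simp only [rePairing, smul_apply, Complex.real_smul, mul_left_comm _ (r : ℂ), ← Finset.mul_sum,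
    Complex.re_ofReal_mul]

theorem rePairing_one_right [DecidableEq ι] (T : Matrix ι ι ℂ) : rePairing T 1 = T.trace.re := by
  simp [rePairing, one_apply, trace]

theorem rePairing_hadamard (d T K : Matrix ι ι ℂ) :
    rePairing (d ⊙ T) K = rePairing T (d ⊙ K) := by
  simp only [rePairing, hadamard_apply, mul_assoc, mul_left_comm (d _ _)]

theorem rePairing_conjTranspose {T : Matrix ι ι ℂ} (hT : T.IsHermitian) (K : Matrix ι ι ℂ) :
    rePairing T Kᴴ = rePairing T K := by
  have hconj : ∑ i, ∑ j, T i j * Kᴴ i j = conj (∑ i, ∑ j, T i j * K i j) := by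
    rw [Finset.sum_comm]
    simp only [map_sum, map_mul, conjTranspose_apply, ← Complex.star_def, hT.apply]
  rw [rePairing, rePairing, hconj, Complex.conj_re]

theorem re_star_dotProduct_mulVec (K : Matrix ι ι ℂ) (x : ι → ℂ) :
    (star x ⬝ᵥ K *ᵥ x).re = rePairing (vecMulVec (star x) x) K := by
  simp only [rePairing, dotProduct, mulVec, vecMulVec_apply, Finset.mul_sum, mul_assoc,
    mul_comm (K _ _)]

theorem posSemidef_of_rePairing_nonneg {K : Matrix ι ι ℂ} (hK : K.IsHermitian)
    (h : ∀ x : ι → ℂ, 0 ≤ rePairing (vecMulVec (star x) x) K) : K.PosSemidef :=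
  .of_dotProduct_mulVec_nonneg hK fun x => Complex.le_def.2
    ⟨(re_star_dotProduct_mulVec K x).symm ▸ h x, (hK.im_star_dotProduct_mulVec_self x).symm⟩

theorem rePairing_nonneg_of_posSemidef_hadamard {A K : Matrix ι ι ℂ} (h : (A ⊙ K).PosSemidef) :
    0 ≤ rePairing A K := by
  have hones : A ⊙ vecMulVec (star fun _ => (1 : ℂ)) (fun _ => 1) = A := by
    ext; simp [vecMulVec]
  have := (Complex.le_def.1 (h.dotProduct_mulVec_nonneg fun _ => 1)).1
  rwa [Complex.zero_re, re_star_dotProduct_mulVec, ← rePairing_hadamard, hones] at this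

theorem exists_rePairing_eq [DecidableEq ι] (f : Matrix ι ι ℂ →ₗ[ℝ] ℝ) :
    ∃ c : Matrix ι ι ℂ, ∀ T, f T = rePairing T c := by
  refine ⟨of fun i j => f (single i j 1) - f (single i j Complex.I) * Complex.I, fun T => ?_⟩
  conv_lhs => rw [matrix_eq_sum_single T]
  simp only [map_sum, rePairing, Complex.re_sum]
  refine Finset.sum_congr rfl fun i _ => Finset.sum_congr rfl fun j _ => ?_
  have hsplit : single i j (T i j) =
      (T i j).re • single i j (1 : ℂ) + (T i j).im • single i j Complex.I := by
    rw [smul_single, smul_single, ← single_add]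
    congr 1
    simp
  rw [hsplit, map_add, map_smul, map_smul]
  simp [Complex.mul_re]

theorem exists_isHermitian_rePairing_of_notMem {C : ProperCone ℝ (Matrix ι ι ℂ)}
    (hC : ∀ T ∈ C, T.IsHermitian) {A : Matrix ι ι ℂ} (hA : A.IsHermitian) (hAC : A ∉ C) :
    ∃ K : Matrix ι ι ℂ, K.IsHermitian ∧ (∀ T ∈ C, 0 ≤ rePairing T K) ∧ rePairing A K < 0 := by
  classical
  have : LocallyConvexSpace ℝ (Matrix ι ι ℂ) := inferInstanceAs (LocallyConvexSpace ℝ (ι → ι → ℂ))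
  obtain ⟨f, hfC, hfA⟩ := C.hyperplane_separation_point hAC
  obtain ⟨c, hc⟩ := exists_rePairing_eq f.toLinearMap
  have hK : ∀ T : Matrix ι ι ℂ, T.IsHermitian → rePairing T (c + cᴴ) = 2 * f T := fun T hT => by
    rw [rePairing_add_right, rePairing_conjTranspose hT, ← ContinuousLinearMap.coe_coe, hc]
    ring
  refine ⟨c + cᴴ, isHermitian_add_transpose_self c, fun T hT => ?_, ?_⟩
  · rw [hK T (hC T hT)]
    linarith [hfC T hT]
  · rw [hK A hA]
    linarith

end RePairing

section SchurWedge

def schurWedge (c₁ c₂ : Matrix ι ι ℂ) : PointedCone ℝ (Matrix ι ι ℂ) where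
  carrier := {T | ∃ Γ Δ : Matrix ι ι ℂ, Γ.PosSemidef ∧ Δ.PosSemidef ∧ T = c₁ ⊙ Γ + c₂ ⊙ Δ}
  add_mem' := by
    rintro _ _ ⟨Γ, Δ, hΓ, hΔ, rfl⟩ ⟨Γ', Δ', hΓ', hΔ', rfl⟩
    exact ⟨Γ + Γ', Δ + Δ', hΓ.add hΓ', hΔ.add hΔ', by simp only [hadamard_add]; abel⟩
  zero_mem' := ⟨0, 0, .zero, .zero, by simp⟩
  smul_mem' := by
    rintro t _ ⟨Γ, Δ, hΓ, hΔ, rfl⟩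
    exact ⟨(t : ℝ) • Γ, (t : ℝ) • Δ, hΓ.smul t.2, hΔ.smul t.2,
      by simp only [hadamard_smul, smul_add]; rfl⟩

variable {c₁ c₂ : Matrix ι ι ℂ}

theorem hadamard_mem_schurWedge_left {Γ : Matrix ι ι ℂ} (hΓ : Γ.PosSemidef) :
    c₁ ⊙ Γ ∈ schurWedge c₁ c₂ :=
  ⟨Γ, 0, hΓ, .zero, by simp⟩

theorem hadamard_mem_schurWedge_right {Δ : Matrix ι ι ℂ} (hΔ : Δ.PosSemidef) :
    c₂ ⊙ Δ ∈ schurWedge c₁ c₂ :=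
  ⟨0, Δ, .zero, hΔ, by simp⟩

theorem IsHermitian.of_mem_schurWedge (hc₁ : c₁.IsHermitian) (hc₂ : c₂.IsHermitian)
    {T : Matrix ι ι ℂ} (hT : T ∈ schurWedge c₁ c₂) : T.IsHermitian := by
  obtain ⟨Γ, Δ, hΓ, hΔ, rfl⟩ := hT
  exact (hc₁.hadamard hΓ.1).add (hc₂.hadamard hΔ.1)

variable [Fintype ι]

theorem trace_re_le_sum_div {Γ Δ : Matrix ι ι ℂ} (hΔ : Δ.PosSemidef)
    (hd₁ : ∀ k, 0 < c₁ k k) (hd₂ : ∀ k, 0 ≤ c₂ k k) :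
    Γ.trace.re ≤ ∑ k, ((c₁ ⊙ Γ + c₂ ⊙ Δ) k k / c₁ k k).re := by
  rw [trace, Complex.re_sum]
  refine Finset.sum_le_sum fun k _ => ?_
  have hk : (c₁ ⊙ Γ + c₂ ⊙ Δ) k k / c₁ k k = Γ k k + c₂ k k * Δ k k / c₁ k k := by
    rw [add_apply, hadamard_apply, hadamard_apply, add_div, mul_div_cancel_left₀ _ (hd₁ k).ne']
  rw [hk, Complex.add_re]
  have := Complex.le_def.1 (div_nonneg (mul_nonneg (hd₂ k) (hΔ.diag_nonneg (i := k))) (hd₁ k).le)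
  simp only [Complex.zero_re] at this
  exact le_add_of_nonneg_right this.1

theorem isClosed_schurWedge (hd₁ : ∀ k, 0 < c₁ k k) (hd₂ : ∀ k, 0 < c₂ k k) :
    IsClosed (schurWedge c₁ c₂ : Set (Matrix ι ι ℂ)) := by
  set β : Matrix ι ι ℂ → ℝ := fun T => ∑ k, (T k k / c₁ k k).re + ∑ k, (T k k / c₂ k k).re
  have hβ : Continuous β := by fun_prop
  have hbound : ∀ Γ Δ : Matrix ι ι ℂ, Γ.PosSemidef → Δ.PosSemidef →
      Γ.trace.re ≤ β (c₁ ⊙ Γ + c₂ ⊙ Δ) ∧ Δ.trace.re ≤ β (c₁ ⊙ Γ + c₂ ⊙ Δ) := by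
    intro Γ Δ hΓ hΔ
    have h₁ := trace_re_le_sum_div (Γ := Γ) hΔ hd₁ fun k => (hd₂ k).le
    have h₂ := add_comm (c₁ ⊙ Γ) (c₂ ⊙ Δ) ▸ trace_re_le_sum_div hΓ hd₂ fun k => (hd₁ k).le
    have := Complex.le_def.1 hΓ.trace_nonneg
    have := Complex.le_def.1 hΔ.trace_nonneg
    simp only [Complex.zero_re] at *
    constructor <;> linarith
  -- near a point `X` of the closure, `Γ` and `Δ` range over a compact set
  refine isClosed_of_closure_subset fun X hX => ?_
  set R := β X + 1
  set S : Set (Matrix ι ι ℂ) :=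
    {Γ | Γ.PosSemidef} ∩ Set.univ.pi fun _ => Set.univ.pi fun _ => Metric.closedBall 0 R
  have hS : IsCompact S := (isCompact_univ_pi fun _ => isCompact_univ_pi fun _ =>
    isCompact_closedBall 0 R).inter_left isClosed_setOf_posSemidef
  have hsub : {T | β T < R} ∩ schurWedge c₁ c₂ ⊆ (fun p => c₁ ⊙ p.1 + c₂ ⊙ p.2) '' S ×ˢ S := by
    rintro _ ⟨hβT, Γ, Δ, hΓ, hΔ, rfl⟩
    have hbox : ∀ G : Matrix ι ι ℂ, G.PosSemidef → G.trace.re ≤ β (c₁ ⊙ Γ + c₂ ⊙ Δ) → G ∈ S :=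
      fun G hG hGβ => ⟨hG, fun i _ j _ => mem_closedBall_zero_iff.2
        ((hG.norm_apply_le_trace i j).trans (hGβ.trans hβT.le))⟩
    exact ⟨(Γ, Δ), ⟨hbox Γ hΓ (hbound Γ Δ hΓ hΔ).1, hbox Δ hΔ (hbound Γ Δ hΓ hΔ).2⟩, rfl⟩
  have hX' : X ∈ closure ({T | β T < R} ∩ schurWedge c₁ c₂) :=
    (isOpen_lt hβ continuous_const).inter_closure ⟨show β X < β X + 1 from lt_add_one _, hX⟩
  obtain ⟨p, ⟨hp₁, hp₂⟩, rfl⟩ :=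
    closure_minimal hsub (((hS.prod hS).image (continuous_matrix fun i j =>
      (continuous_const.mul (continuous_fst.matrix_elem i j)).add
        (continuous_const.mul (continuous_snd.matrix_elem i j)))).isClosed) hX'
  exact ⟨p.1, p.2, hp₁.1, hp₂.1, rfl⟩

theorem exists_posDef_of_notMem_schurWedge [DecidableEq ι] {A : Matrix ι ι ℂ}
    (hc₁ : c₁.IsHermitian) (hc₂ : c₂.IsHermitian) (hd₁ : ∀ k, 0 < c₁ k k) (hd₂ : ∀ k, 0 < c₂ k k)
    (hpsd : ∀ Γ : Matrix ι ι ℂ, Γ.PosSemidef → Γ ∈ schurWedge c₁ c₂)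
    (hA : A.IsHermitian) (hAW : A ∉ schurWedge c₁ c₂) :
    ∃ K : Matrix ι ι ℂ, K.PosDef ∧ (c₁ ⊙ K).PosSemidef ∧ (c₂ ⊙ K).PosSemidef ∧
      ¬ (A ⊙ K).PosSemidef := by
  obtain ⟨K, hK, hKW, hKA⟩ := exists_isHermitian_rePairing_of_notMem
    (C := ⟨schurWedge c₁ c₂, isClosed_schurWedge hd₁ hd₂⟩)
    (fun T => IsHermitian.of_mem_schurWedge hc₁ hc₂) hA hAW
  have hK₀ : K.PosSemidef := posSemidef_of_rePairing_nonneg hK fun x =>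
    hKW _ (hpsd _ (posSemidef_vecMulVec_star_self x))
  have hK₁ : (c₁ ⊙ K).PosSemidef := posSemidef_of_rePairing_nonneg (hc₁.hadamard hK) fun x =>
    rePairing_hadamard c₁ _ K ▸
      hKW _ (hadamard_mem_schurWedge_left (posSemidef_vecMulVec_star_self x))
  have hK₂ : (c₂ ⊙ K).PosSemidef := posSemidef_of_rePairing_nonneg (hc₂.hadamard hK) fun x =>
    rePairing_hadamard c₂ _ K ▸
      hKW _ (hadamard_mem_schurWedge_right (posSemidef_vecMulVec_star_self x))
  obtain ⟨ε, hε, hεA⟩ := exists_pos_mul_lt (neg_pos.2 hKA) A.trace.re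
  have hdiag : ∀ c : Matrix ι ι ℂ, (∀ k, 0 < c k k) → (c ⊙ (ε • 1 : Matrix ι ι ℂ)).PosSemidef :=
    fun c hc => by
      rw [hadamard_smul, hadamard_one]
      exact (PosSemidef.diagonal fun k => (hc k).le).smul hε.le
  refine ⟨K + ε • 1, PosDef.posSemidef_add hK₀ (PosDef.one.smul hε), ?_, ?_, fun h => ?_⟩
  · exact hadamard_add c₁ K _ ▸ hK₁.add (hdiag c₁ hd₁)
  · exact hadamard_add c₂ K _ ▸ hK₂.add (hdiag c₂ hd₂)
  · have := rePairing_nonneg_of_posSemidef_hadamard h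
    rw [rePairing_add_right, rePairing_real_smul_right, rePairing_one_right] at this
    linarith

end SchurWedge

section OneSubMulConj

variable {μ : ι → ℂ}

def oneSubMulConj (μ : ι → ℂ) : Matrix ι ι ℂ := of fun i j => 1 - μ i * conj (μ j)

theorem isHermitian_oneSubMulConj (μ : ι → ℂ) : (oneSubMulConj μ).IsHermitian := by
  ext i j
  simp [oneSubMulConj, mul_comm]

theorem oneSubMulConj_apply_self_pos (hμ : ∀ i, ‖μ i‖ < 1) (i : ι) : 0 < oneSubMulConj μ i i := by
  rw [oneSubMulConj, of_apply, Complex.mul_conj, Complex.normSq_eq_norm_sq, ← Complex.ofReal_one,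
    ← Complex.ofReal_sub, Complex.zero_lt_real, sub_pos]
  exact pow_lt_one₀ (norm_nonneg _) (hμ i) two_ne_zero

theorem mem_schurWedge_of_posSemidef [Fintype ι] (hμ : ∀ i, ‖μ i‖ < 1) (c₂ : Matrix ι ι ℂ)
    {Γ : Matrix ι ι ℂ} (hΓ : Γ.PosSemidef) : Γ ∈ schurWedge (oneSubMulConj μ) c₂ := by
  refine ⟨_, 0, (posSemidef_szegoKernel hμ).hadamard hΓ, .zero, ?_⟩
  ext i j
  have hne : 1 - μ i * conj (μ j) ≠ 0 :=
    sub_ne_zero.2 fun h => by simpa [← h] using norm_mul_conj_lt_one hμ i j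
  simp [oneSubMulConj, ← mul_assoc, mul_inv_cancel₀ hne]

end OneSubMulConj

end Matrix

theorem separation_from_wedge_general
    {n : ℕ} (l : Fin n → ℂ × ℂ) (hl : ∀ i, l i ∈ Bidisk) (M : ℝ)
    (hnot : ¬ ∃ Γ Δ : Matrix (Fin n) (Fin n) ℂ, Γ.PosSemidef ∧ Δ.PosSemidef ∧
      ∀ i j, (M : ℂ) * (if i = j then 1 else 0) - 1 =
        (1 - (l i).1 * conj ((l j).1)) * Γ i j + (1 - (l i).2 * conj ((l j).2)) * Δ i j) :
    ∃ K : Matrix (Fin n) (Fin n) ℂ, K.PosDef ∧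
      (Matrix.of fun i j => (1 - (l i).1 * conj ((l j).1)) * K i j).PosSemidef ∧
      (Matrix.of fun i j => (1 - (l i).2 * conj ((l j).2)) * K i j).PosSemidef ∧
      ¬ (Matrix.of fun i j =>
          ((M : ℂ) * (if i = j then 1 else 0) - 1) * K i j).PosSemidef := by
  have h₁ : ∀ i, ‖(l i).1‖ < 1 := fun i => (hl i).1
  have h₂ : ∀ i, ‖(l i).2‖ < 1 := fun i => (hl i).2
  set A : Matrix (Fin n) (Fin n) ℂ := of fun i j => (M : ℂ) * (if i = j then 1 else 0) - 1
  have hA : A.IsHermitian := by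
    ext i j
    by_cases h : i = j <;> simp [A, h, Ne.symm]
  have hAW : A ∉ schurWedge (oneSubMulConj fun i => (l i).1) (oneSubMulConj fun i => (l i).2) :=
    fun ⟨Γ, Δ, hΓ, hΔ, hT⟩ => hnot ⟨Γ, Δ, hΓ, hΔ, fun i j => congrFun (congrFun hT i) j⟩
  exact exists_posDef_of_notMem_schurWedge (isHermitian_oneSubMulConj _)
    (isHermitian_oneSubMulConj _) (oneSubMulConj_apply_self_pos h₁)
    (oneSubMulConj_apply_self_pos h₂) (fun _ => mem_schurWedge_of_posSemidef h₁ _) hA hAW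

/-- Hahn–Banach separation step: if `M·I − J` (with `J` the all-ones matrix) is not in the
closed wedge `𝒯_n` of matrices `T_{ij} = (1 − λ_i¹ conj(λ_j¹))Γ_{ij} +
(1 − λ_i² conj(λ_j²))Δ_{ij}` with `Γ, Δ ⪰ 0`, then there is a positive definite matrix
`K` whose Schur products with `(1 − λ_i¹ conj(λ_j¹))` and `(1 − λ_i² conj(λ_j²))` are
positive semidefinite, but such that `((M δ_{ij} − 1) K_{ij})` is not positive
semidefinite. -/
theorem separation_from_wedge
    {n : ℕ} (l : Fin n → ℂ × ℂ) (hl : ∀ i, l i ∈ Bidisk) (M : ℝ) (hM : 0 < M)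
    (hnot : ¬ ∃ Γ Δ : Matrix (Fin n) (Fin n) ℂ, Γ.PosSemidef ∧ Δ.PosSemidef ∧
      ∀ i j, (M : ℂ) * (if i = j then 1 else 0) - 1 =
        (1 - (l i).1 * conj ((l j).1)) * Γ i j + (1 - (l i).2 * conj ((l j).2)) * Δ i j) :
    ∃ K : Matrix (Fin n) (Fin n) ℂ, K.PosDef ∧
      (Matrix.of fun i j => (1 - (l i).1 * conj ((l j).1)) * K i j).PosSemidef ∧
      (Matrix.of fun i j => (1 - (l i).2 * conj ((l j).2)) * K i j).PosSemidef ∧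
      ¬ (Matrix.of fun i j =>
          ((M : ℂ) * (if i = j then 1 else 0) - 1) * K i j).PosSemidef :=
  separation_from_wedge_general l hl M hnot
end
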